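/- Let p : ℂⁿ → ℂ be a polynomial and F : ℂⁿ → ℂ an entire function such that the product p·F is of exponential type R (i.e., for each N there is C_N with |p(λ)F(λ)| ≤ C_N (1+‖λ‖)^{-N} e^{R‖Re λ‖}). Then F itself is of exponential type R. -/

import Mathlib

/-- The real part of a point of `ℂⁿ`, as a point of `ℝⁿ`. -/
noncomputable def rePart (n : ℕ) (l : EuclideanSpace ℂ (Fin n)) :
    EuclideanSpace ℝ (Fin n) :=
  WithLp.toLp 2 (fun i => (l i).re)

/-- A function on `ℂⁿ` is of exponential type `R` if for every `N` there is `C_N > 0` with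
`|f(λ)| ≤ C_N (1+‖λ‖)^{-N} e^{R ‖Re λ‖}` for all `λ`. -/
def ExpTypeC (n : ℕ) (R : ℝ) (f : EuclideanSpace ℂ (Fin n) → ℂ) : Prop :=
  ∀ N : ℕ, ∃ C > (0 : ℝ), ∀ l : EuclideanSpace ℂ (Fin n),
    ‖f l‖ ≤ C * (1 + ‖l‖) ^ (-(N : ℝ)) * Real.exp (R * ‖rePart n l‖)

/-!
Choose a direction `e` on which the top homogeneous part of `p` does not vanish. On every
complex line `z ↦ λ + z e` the restriction of `p` is a polynomial in `z` of degree
`m = deg p` whose leading coefficient is that nonzero value, independent of `λ`. A measure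
count gives a circle `|z| = r`, `1 ≤ r ≤ 2`, at distance at least `1 / (2(m + 1))` from the
moduli of all roots, so `|p|` is bounded below on it uniformly in `λ`, and the maximum modulus
principle bounds `|F(λ)|` by a constant times the supremum of `|p F|` over the ball of radius
`2‖e‖` about `λ`. Over such a ball the weight `(1 + ‖λ‖)^{-N} e^{R ‖Re λ‖}` changes by at most
a constant factor.
-/

open Polynomial Metric MeasureTheory

theorem Finsupp.prod_pow_eq_prod_map_toMultiset {σ M : Type*} [CommMonoid M] (f : σ → M)
    (d : σ →₀ ℕ) : (d.prod fun i k => f i ^ k) = (d.toMultiset.map f).prod := by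
  rw [Finsupp.toMultiset_map, Finsupp.prod_toMultiset, Finsupp.prod_mapDomain_index]
  all_goals simp [pow_add]

theorem Finsupp.card_toMultiset_eq_degree {σ : Type*} (d : σ →₀ ℕ) :
    Multiset.card d.toMultiset = d.degree :=
  d.card_toMultiset

namespace MvPolynomial

variable {R σ : Type*} [CommRing R]

theorem natDegree_prod_pow_le_degree {b : σ → R[X]} (hb : ∀ i, (b i).natDegree ≤ 1)
    (d : σ →₀ ℕ) : (d.prod fun i k => b i ^ k).natDegree ≤ d.degree := by
  rw [Finsupp.prod_pow_eq_prod_map_toMultiset, ← Finsupp.card_toMultiset_eq_degree]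
  refine (natDegree_multiset_prod_le _).trans ?_
  simpa using Multiset.sum_le_card_nsmul (d.toMultiset.map fun i => (b i).natDegree) 1
    (by simpa using fun i _ => hb i)

theorem coeff_degree_prod_pow {b : σ → R[X]} (hb : ∀ i, (b i).natDegree ≤ 1) (d : σ →₀ ℕ) :
    (d.prod fun i k => b i ^ k).coeff d.degree = d.prod fun i k => (b i).coeff 1 ^ k := by
  rw [Finsupp.prod_pow_eq_prod_map_toMultiset, Finsupp.prod_pow_eq_prod_map_toMultiset,
    ← Finsupp.card_toMultiset_eq_degree]
  simpa using coeff_multiset_prod_of_natDegree_le (d.toMultiset.map b) 1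
    (by simpa using fun i _ => hb i)

theorem natDegree_eval₂_C_le_totalDegree {b : σ → R[X]} (hb : ∀ i, (b i).natDegree ≤ 1)
    (p : MvPolynomial σ R) : (eval₂ Polynomial.C b p).natDegree ≤ p.totalDegree := by
  refine natDegree_sum_le_of_forall_le _ _ fun d hd => ?_
  exact (natDegree_C_mul_le _ _).trans <|
    (natDegree_prod_pow_le_degree hb d).trans (le_totalDegree hd)

theorem coeff_eval₂_C_of_totalDegree_le {b : σ → R[X]} (hb : ∀ i, (b i).natDegree ≤ 1)
    {p : MvPolynomial σ R} {m : ℕ} (hm : p.totalDegree ≤ m) :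
    (eval₂ Polynomial.C b p).coeff m =
      eval (fun i => (b i).coeff 1) (homogeneousComponent m p) := by
  rw [homogeneousComponent_apply, map_sum, Finset.sum_filter]
  refine (finsetSum_coeff _ _ _).trans (Finset.sum_congr rfl fun d hd => ?_)
  dsimp only
  rw [Polynomial.coeff_C_mul, eval_monomial]
  split_ifs with hdm
  · rw [← hdm, coeff_degree_prod_pow hb]
    rfl
  · have hlt : d.degree < m := (le_totalDegree hd).trans hm |>.lt_of_ne hdm
    rw [coeff_eq_zero_of_natDegree_lt ((natDegree_prod_pow_le_degree hb d).trans_lt hlt),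
      mul_zero]

noncomputable def restrictLine (p : MvPolynomial σ R) (x e : σ → R) : R[X] :=
  eval₂ Polynomial.C (fun i => Polynomial.C (e i) * Polynomial.X + Polynomial.C (x i)) p

theorem eval_restrictLine (p : MvPolynomial σ R) (x e : σ → R) (z : R) :
    (p.restrictLine x e).eval z = eval (fun i => x i + z * e i) p := by
  rw [restrictLine, polynomial_eval_eval₂]
  simp only [Polynomial.eval_add, Polynomial.eval_mul, Polynomial.eval_C, Polynomial.eval_X,
    mul_comm _ z, add_comm _ (x _)]
  rw [show (evalRingHom z).comp Polynomial.C = RingHom.id R from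
    RingHom.ext fun _ => Polynomial.eval_C]
  rfl

theorem natDegree_restrictLine_le (p : MvPolynomial σ R) (x e : σ → R) :
    (p.restrictLine x e).natDegree ≤ p.totalDegree :=
  natDegree_eval₂_C_le_totalDegree (fun _ => natDegree_linear_le) p

theorem coeff_restrictLine_totalDegree (p : MvPolynomial σ R) (x e : σ → R) :
    (p.restrictLine x e).coeff p.totalDegree =
      eval e (homogeneousComponent p.totalDegree p) := by
  rw [restrictLine, coeff_eval₂_C_of_totalDegree_le (fun _ => natDegree_linear_le) le_rfl]
  simp

theorem exists_eval_homogeneousComponent_totalDegree_ne_zero [IsDomain R] [Infinite R]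
    {p : MvPolynomial σ R} (hp : p ≠ 0) :
    ∃ e : σ → R, eval e (homogeneousComponent p.totalDegree p) ≠ 0 := by
  obtain ⟨d, hd, hdeg⟩ := Finset.exists_mem_eq_sup p.support (support_nonempty.mpr hp)
    fun d => d.sum fun _ k => k
  have hdeg' : d.degree = p.totalDegree := hdeg.symm
  have htop : homogeneousComponent p.totalDegree p ≠ 0 := fun h0 => by
    have hcoeff := coeff_homogeneousComponent p.totalDegree p d
    rw [h0, coeff_zero, if_pos hdeg'] at hcoeff
    exact mem_support_iff.mp hd hcoeff.symm
  by_contra! hzero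
  exact htop (funext fun e => by simpa using hzero e)

end MvPolynomial

theorem exists_mem_Icc_forall_le_abs_sub {a b : ℝ} (hab : a < b) {m : ℕ} {s : Finset ℝ}
    (hs : s.card ≤ m) : ∃ r ∈ Set.Icc a b, ∀ t ∈ s, (b - a) / (2 * (m + 1)) ≤ |r - t| := by
  set δ := (b - a) / (2 * (m + 1))
  have hδ : 0 ≤ δ := by have := hab.le; positivity
  have hvol : volume (⋃ t ∈ s, ball t δ) < volume (Set.Icc a b) := calc
    _ ≤ ∑ t ∈ s, volume (ball t δ) := measure_biUnion_finset_le _ _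
    _ = s.card * ENNReal.ofReal (2 * δ) := by
      simp only [Real.volume_ball, Finset.sum_const, nsmul_eq_mul]
    _ ≤ ENNReal.ofReal (m * (2 * δ)) := by
      rw [ENNReal.ofReal_mul (Nat.cast_nonneg m), ENNReal.ofReal_natCast]
      gcongr
    _ < ENNReal.ofReal (b - a) := by
      rw [ENNReal.ofReal_lt_ofReal_iff (by linarith)]
      simp only [δ]
      field_simp
      nlinarith
    _ = volume (Set.Icc a b) := Real.volume_Icc.symm
  obtain ⟨r, hr, hr_far⟩ := Set.not_subset.mp fun h => (measure_mono h).not_gt hvol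
  simp only [Set.mem_iUnion, mem_ball, not_exists, not_lt] at hr_far
  exact ⟨r, hr, fun t ht => by simpa [Real.dist_eq] using hr_far t ht⟩

theorem Polynomial.norm_leadingCoeff_mul_pow_le_norm_eval {K : Type*} [NormedField K]
    {q : K[X]} (hroots : Multiset.card q.roots = q.natDegree) {z : K} {δ : ℝ} (hδ : 0 ≤ δ)
    (hz : ∀ t ∈ q.roots, δ ≤ ‖z - t‖) : ‖q.leadingCoeff‖ * δ ^ q.natDegree ≤ ‖q.eval z‖ := by
  have hfactor : q.eval z = q.leadingCoeff * (q.roots.map fun t => z - t).prod := by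
    conv_lhs => rw [← C_leadingCoeff_mul_prod_multiset_X_sub_C hroots]
    simp [eval_multiset_prod, Multiset.map_map]
  rw [hfactor, norm_mul, ← hroots]
  gcongr
  have hnorm := map_multiset_prod (normHom : K →*₀ ℝ) (q.roots.map fun t => z - t)
  simp only [normHom_apply, Multiset.map_map, Function.comp_def] at hnorm
  rw [hnorm, ← Multiset.prod_replicate, ← Multiset.map_const']
  exact Multiset.prod_map_le_prod_map₀ _ _ (fun _ _ => hδ) hz

theorem Polynomial.exists_mem_Icc_forall_norm_eq_le_norm_eval (q : ℂ[X]) :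
    ∃ r ∈ Set.Icc (1 : ℝ) 2, ∀ z : ℂ, ‖z‖ = r →
      ‖q.leadingCoeff‖ * (2 * (q.natDegree + 1) : ℝ)⁻¹ ^ q.natDegree ≤ ‖q.eval z‖ := by
  have hcard : (q.roots.map fun t => ‖t‖).toFinset.card ≤ q.natDegree :=
    (Multiset.toFinset_card_le _).trans (by simp [IsAlgClosed.card_roots_eq_natDegree])
  obtain ⟨r, hr, hfar⟩ := exists_mem_Icc_forall_le_abs_sub one_lt_two hcard
  refine ⟨r, hr, fun z hz => norm_leadingCoeff_mul_pow_le_norm_eval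
    IsAlgClosed.card_roots_eq_natDegree (by positivity) fun t ht => ?_⟩
  calc (2 * (q.natDegree + 1) : ℝ)⁻¹ = (2 - 1) / (2 * (q.natDegree + 1)) := by ring
    _ ≤ |r - ‖t‖| := hfar _ (Multiset.mem_toFinset.mpr (Multiset.mem_map_of_mem _ ht))
    _ ≤ ‖z - t‖ := hz ▸ abs_norm_sub_norm_le z t

theorem norm_apply_zero_le_of_norm_eval_mul_le {q : ℂ[X]} (hq : q ≠ 0) {g : ℂ → ℂ}
    (hg : DifferentiableOn ℂ g (closedBall 0 2)) {M : ℝ}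
    (hM : ∀ z ∈ closedBall (0 : ℂ) 2, ‖q.eval z * g z‖ ≤ M) :
    ‖g 0‖ ≤ (‖q.leadingCoeff‖ * (2 * (q.natDegree + 1) : ℝ)⁻¹ ^ q.natDegree)⁻¹ * M := by
  obtain ⟨r, ⟨hr1, hr2⟩, hlow⟩ := q.exists_mem_Icc_forall_norm_eq_le_norm_eval
  set c := ‖q.leadingCoeff‖ * (2 * (q.natDegree + 1) : ℝ)⁻¹ ^ q.natDegree
  have hc : 0 < c := by
    have := norm_pos_iff.mpr (leadingCoeff_ne_zero.mpr hq)
    positivity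
  have hr : r ≠ 0 := by positivity
  refine Complex.norm_le_of_forall_mem_frontier_norm_le isBounded_ball
    (hg.diffContOnCl_ball (closedBall_subset_closedBall hr2)) (fun z hz => ?_)
    (subset_closure (mem_ball_self (by positivity)))
  rw [frontier_ball 0 hr, mem_sphere_zero_iff_norm] at hz
  rw [inv_mul_eq_div, le_div_iff₀ hc]
  calc ‖g z‖ * c ≤ ‖g z‖ * ‖q.eval z‖ := by gcongr; exact hlow z hz
    _ = ‖q.eval z * g z‖ := by rw [norm_mul, mul_comm]
    _ ≤ M := hM z (mem_closedBall_zero_iff.mpr (hz ▸ hr2))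

theorem exists_norm_le_mul_of_norm_eval_mul_le {ι : Type*} [Fintype ι]
    {p : MvPolynomial ι ℂ} (hp : p ≠ 0) :
    ∃ K > 0, ∃ ρ ≥ 0, ∀ F : EuclideanSpace ℂ ι → ℂ, Differentiable ℂ F →
      ∀ (l : EuclideanSpace ℂ ι) (M : ℝ),
        (∀ μ, ‖μ - l‖ ≤ ρ → ‖MvPolynomial.eval (fun i => μ i) p * F μ‖ ≤ M) →
          ‖F l‖ ≤ K * M := by
  obtain ⟨e, he⟩ := MvPolynomial.exists_eval_homogeneousComponent_totalDegree_ne_zero hp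
  set m := p.totalDegree
  set a := MvPolynomial.eval e (MvPolynomial.homogeneousComponent m p)
  set E : EuclideanSpace ℂ ι := WithLp.toLp 2 e
  have ha : 0 < ‖a‖ := norm_pos_iff.mpr he
  refine ⟨(‖a‖ * (2 * (m + 1) : ℝ)⁻¹ ^ m)⁻¹, by positivity, 2 * ‖E‖, by positivity,
    fun F hF l M hM => ?_⟩
  set Q := p.restrictLine (fun i => l i) e
  have hQm : Q.coeff m = a := p.coeff_restrictLine_totalDegree _ e
  have hQdeg : Q.natDegree = m :=
    (p.natDegree_restrictLine_le _ e).antisymm (le_natDegree_of_ne_zero (hQm ▸ he))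
  have hQ : Q ≠ 0 := fun h0 => he (by rw [← hQm, h0, coeff_zero])
  have hQlc : Q.leadingCoeff = a := by rw [leadingCoeff, hQdeg, hQm]
  have hline : ∀ z ∈ closedBall (0 : ℂ) 2, ‖Q.eval z * F (l + z • E)‖ ≤ M := fun z hz => by
    refine le_of_eq_of_le ?_ (hM (l + z • E) ?_)
    · simp [Q, MvPolynomial.eval_restrictLine, E]
    · rw [add_sub_cancel_left, norm_smul]
      gcongr
      simpa using hz
  simpa [hQdeg, hQlc, E] using norm_apply_zero_le_of_norm_eval_mul_le hQ
    (hF.comp (by fun_prop)).differentiableOn hline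

theorem rePart_add {n : ℕ} (x y : EuclideanSpace ℂ (Fin n)) :
    rePart n (x + y) = rePart n x + rePart n y := by
  ext i
  simp [rePart]

theorem norm_rePart_le {n : ℕ} (x : EuclideanSpace ℂ (Fin n)) : ‖rePart n x‖ ≤ ‖x‖ := by
  rw [EuclideanSpace.norm_eq, EuclideanSpace.norm_eq]
  gcongr with i
  simpa [rePart] using Complex.abs_re_le_norm (x i)

theorem mul_norm_rePart_add_le {n : ℕ} (R : ℝ) (x y : EuclideanSpace ℂ (Fin n)) :
    R * ‖rePart n (x + y)‖ ≤ R * ‖rePart n x‖ + |R| * ‖y‖ := by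
  have hdiff : |‖rePart n (x + y)‖ - ‖rePart n x‖| ≤ ‖y‖ := by
    refine (abs_norm_sub_norm_le _ _).trans ?_
    rw [rePart_add, add_sub_cancel_left]
    exact norm_rePart_le y
  have := (le_abs_self _).trans
    ((abs_mul R _).trans_le (mul_le_mul_of_nonneg_left hdiff (abs_nonneg R)))
  linarith

theorem one_add_norm_add_rpow_neg_le {E : Type*} [SeminormedAddCommGroup E] (x y : E) {s : ℝ}
    (hs : 0 ≤ s) : (1 + ‖x + y‖) ^ (-s) ≤ (1 + ‖y‖) ^ s * (1 + ‖x‖) ^ (-s) := by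
  have hx : 1 + ‖x‖ ≤ (1 + ‖x + y‖) * (1 + ‖y‖) := by
    have : ‖x‖ ≤ ‖x + y‖ + ‖y‖ := by simpa using norm_sub_le (x + y) y
    nlinarith [norm_nonneg y, norm_nonneg (x + y)]
  rw [Real.rpow_neg (by positivity), Real.rpow_neg (by positivity), ← div_eq_mul_inv,
    le_div_iff₀ (by positivity), inv_mul_le_iff₀ (by positivity),
    ← Real.mul_rpow (by positivity) (by positivity)]
  exact Real.rpow_le_rpow (by positivity) hx hs

theorem rpow_neg_mul_exp_rePart_add_le {n : ℕ} (R : ℝ) {s ρ : ℝ} (hs : 0 ≤ s)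
    (x : EuclideanSpace ℂ (Fin n)) {y : EuclideanSpace ℂ (Fin n)} (hy : ‖y‖ ≤ ρ) :
    (1 + ‖x + y‖) ^ (-s) * Real.exp (R * ‖rePart n (x + y)‖) ≤
      (1 + ρ) ^ s * Real.exp (|R| * ρ) * ((1 + ‖x‖) ^ (-s) * Real.exp (R * ‖rePart n x‖)) := by
  have hpoly : (1 + ‖x + y‖) ^ (-s) ≤ (1 + ρ) ^ s * (1 + ‖x‖) ^ (-s) :=
    (one_add_norm_add_rpow_neg_le x y hs).trans <| mul_le_mul_of_nonneg_right
      (Real.rpow_le_rpow (by positivity) (by linarith) hs) (by positivity)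
  have hexp : Real.exp (R * ‖rePart n (x + y)‖) ≤
      Real.exp (|R| * ρ) * Real.exp (R * ‖rePart n x‖) := by
    rw [← Real.exp_add, Real.exp_le_exp]
    nlinarith [mul_norm_rePart_add_le R x y, abs_nonneg R]
  calc _ ≤ ((1 + ρ) ^ s * (1 + ‖x‖) ^ (-s)) *
        (Real.exp (|R| * ρ) * Real.exp (R * ‖rePart n x‖)) :=
        mul_le_mul hpoly hexp (by positivity)
          (mul_nonneg (Real.rpow_nonneg (by linarith [norm_nonneg y]) s) (by positivity))
    _ = _ := by ring

theorem stmt0_general (n : ℕ) (R : ℝ)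
    (p : MvPolynomial (Fin n) ℂ) (hp : p ≠ 0)
    (F : EuclideanSpace ℂ (Fin n) → ℂ) (hF : Differentiable ℂ F)
    (h : ExpTypeC n R fun l => MvPolynomial.eval (fun i => l i) p * F l) :
    ExpTypeC n R F := by
  obtain ⟨K, hK, ρ, hρ, hdiv⟩ := exists_norm_le_mul_of_norm_eval_mul_le hp
  intro N
  obtain ⟨C, hC, hpF⟩ := h N
  refine ⟨K * (C * ((1 + ρ) ^ (N : ℝ) * Real.exp (|R| * ρ))), by positivity, fun l => ?_⟩
  calc ‖F l‖ ≤ K * (C * ((1 + ρ) ^ (N : ℝ) * Real.exp (|R| * ρ) *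
        ((1 + ‖l‖) ^ (-(N : ℝ)) * Real.exp (R * ‖rePart n l‖)))) := by
        refine hdiv F hF l _ fun μ hμ => ?_
        obtain ⟨y, rfl⟩ : ∃ y, μ = l + y := ⟨μ - l, by abel⟩
        rw [add_sub_cancel_left] at hμ
        refine (hpF (l + y)).trans ?_
        rw [mul_assoc]
        exact mul_le_mul_of_nonneg_left
          (rpow_neg_mul_exp_rePart_add_le R (Nat.cast_nonneg N) l hμ) hC.le
    _ = _ := by ring

/-- If `p` is a (nonzero) polynomial and `F` is entire with `p·F` of exponential type `R`,
then `F` is of exponential type `R`. -/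
theorem stmt0 (n : ℕ) (R : ℝ) (hR : 0 < R)
    (p : MvPolynomial (Fin n) ℂ) (hp : p ≠ 0)
    (F : EuclideanSpace ℂ (Fin n) → ℂ) (hF : Differentiable ℂ F)
    (h : ExpTypeC n R fun l => MvPolynomial.eval (fun i => l i) p * F l) :
    ExpTypeC n R F :=
  stmt0_general n R p hp F hF h
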